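/- Let t be a nonnegative integer. The (i,j)-th entry of the matrix M(t) := U(t)·S(t)·S(t)^T·U(t) equals (-1)^{i+j}·binom(i+j, i), for all 0 ≤ i, j ≤ t. -/

import Mathlib

open Matrix

/-- The backward identity matrix `U(t)` of order `t+1`: entry `(i,j)` is `δ_{i+j,t}`. -/
def Umat (t : ℕ) : Matrix (Fin (t+1)) (Fin (t+1)) ℤ :=
  fun i j => if (i : ℕ) + (j : ℕ) = t then 1 else 0

/-- The matrix `S(t)` of order `t+1`: entry `(i,j)` is `(-1)^(j-i) * C(t-i, j-i)`,
where the binomial coefficient is `0` when `j < i`. -/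
def Smat (t : ℕ) : Matrix (Fin (t+1)) (Fin (t+1)) ℤ :=
  fun i j =>
    if (i : ℕ) ≤ (j : ℕ) then
      (-1) ^ ((j : ℕ) - (i : ℕ)) * (Nat.choose (t - (i : ℕ)) ((j : ℕ) - (i : ℕ)) : ℤ)
    else 0

/-- The forward shift matrix `T(t)` of order `t+1`: entry `(i,j)` is `δ_{j-i,1}`. -/
def Tmat (t : ℕ) : Matrix (Fin (t+1)) (Fin (t+1)) ℤ :=
  fun i j => if (j : ℕ) = (i : ℕ) + 1 then 1 else 0

/-- The matrix `M(t) := U(t) * S(t) * S(t)ᵀ * U(t)`. -/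
def Mmat (t : ℕ) : Matrix (Fin (t+1)) (Fin (t+1)) ℤ :=
  Umat t * Smat t * (Smat t)ᵀ * Umat t

/-- The row vector `β(s;t) = (C(s,0), C(s,1), ..., C(s,t))`. -/
def betaVec (s t : ℕ) : Fin (t+1) → ℤ := fun j => (Nat.choose s (j : ℕ) : ℤ)

/-!
Multiplying by `U(t)` on either side reverses the order of the rows or columns, so
`M(t)ᵢⱼ = ∑ₖ S(t)_{rev i, k} S(t)_{rev j, k}`. Reindexing by `k ↦ rev k` turns the entries into
`S(t)_{rev i, rev k} = (-1)^(i+k) C(i, k)`, the signs combine to `(-1)^(i+j)`, and what remains is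
Vandermonde's identity `∑ₖ C(i, k) C(j, k) = C(i + j, i)`.
-/

open Finset in
theorem Nat.sum_range_choose_mul_choose (m n N : ℕ) (hn : n ≤ N) :
    ∑ k ∈ range (N + 1), m.choose k * n.choose k = (m + n).choose m := by
  have hvanish : ∀ k ∈ range (N + 1), k ∉ range (n + 1) → m.choose k * n.choose k = 0 :=
    fun k _ hk => by simp [Nat.choose_eq_zero_of_lt (by simpa using hk : n < k)]
  rw [← sum_subset (range_subset_range.2 (by omega)) hvanish, Nat.choose_symm_add,
    Nat.add_choose_eq, Nat.sum_antidiagonal_eq_sum_range_succ_mk]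
  refine sum_congr rfl fun k hk => ?_
  rw [Nat.choose_symm (mem_range_succ_iff.1 hk)]

theorem Umat_apply (t : ℕ) (i j : Fin (t + 1)) : Umat t i j = if i.rev = j then 1 else 0 := by
  simp only [Umat, Fin.ext_iff, Fin.val_rev]
  split_ifs <;> omega

theorem Umat_mul_apply (t : ℕ) (A : Matrix (Fin (t + 1)) (Fin (t + 1)) ℤ) (i j : Fin (t + 1)) :
    (Umat t * A) i j = A i.rev j := by
  simp [mul_apply, Umat_apply]

theorem mul_Umat_apply (t : ℕ) (A : Matrix (Fin (t + 1)) (Fin (t + 1)) ℤ) (i j : Fin (t + 1)) :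
    (A * Umat t) i j = A i j.rev := by
  simp [mul_apply, Umat_apply, Fin.rev_eq_iff]

theorem Smat_rev_rev (t : ℕ) (i k : Fin (t + 1)) :
    Smat t i.rev k.rev = (-1) ^ ((i : ℕ) + k) * ((i : ℕ).choose k : ℤ) := by
  have hi := i.is_le
  have hk := k.is_le
  simp only [Smat, Fin.val_rev]
  by_cases hki : (k : ℕ) ≤ i
  · rw [if_pos (by omega), show t + 1 - (k + 1) - (t + 1 - (i + 1)) = i - k by omega,
      show t - (t + 1 - (i + 1)) = i by omega, Nat.choose_symm hki]
    congr 1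
    rw [show (i : ℕ) + k = i - k + 2 * k by omega, pow_add, pow_mul]
    simp
  · rw [if_neg (by omega), Nat.choose_eq_zero_of_lt (by omega)]
    simp

theorem Mmat_apply (t : ℕ) (i j : Fin (t + 1)) :
    Mmat t i j = ∑ k, Smat t i.rev k * Smat t j.rev k := by
  rw [Mmat, mul_Umat_apply, mul_apply]
  simp only [Umat_mul_apply, transpose_apply]

/-- The `(i,j)`-th entry of `M(t) = U(t)·S(t)·S(t)ᵀ·U(t)` equals `(-1)^(i+j) · C(i+j, i)`. -/
theorem Mmat_entry (t : ℕ) (i j : Fin (t+1)) :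
    Mmat t i j = (-1) ^ ((i : ℕ) + (j : ℕ)) * (Nat.choose ((i : ℕ) + (j : ℕ)) (i : ℕ) : ℤ) := by
  have hsign (k : ℕ) : (-1 : ℤ) ^ ((i : ℕ) + k) * (-1) ^ ((j : ℕ) + k) = (-1) ^ ((i : ℕ) + j) := by
    rw [← pow_add, show (i : ℕ) + k + (j + k) = i + j + 2 * k by omega, pow_add, pow_mul]
    simp
  calc Mmat t i j = ∑ k : Fin (t + 1), Smat t i.rev k.rev * Smat t j.rev k.rev := by
        rw [Mmat_apply, ← Equiv.sum_comp Fin.revPerm]; rfl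
    _ = (-1) ^ ((i : ℕ) + j) *
          ∑ k ∈ Finset.range (t + 1), ((i : ℕ).choose k * (j : ℕ).choose k : ℤ) := by
        rw [← Fin.sum_univ_eq_sum_range, Finset.mul_sum]
        refine Finset.sum_congr rfl fun k _ => ?_
        rw [Smat_rev_rev, Smat_rev_rev, ← hsign k]
        ring
    _ = _ := by
        rw [← Nat.sum_range_choose_mul_choose i j t j.is_le]
        push_cast
        rfl
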